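/- arXiv:1304.7714 — 2 statements merged into one kernel-verified Lean document; each statement's English description precedes it below -/
import Mathlib

section
/- For every β ≥ 1, the ideal I_{ω^{β+1}} on ω^{β+1} is isomorphic (via a bijection of underlying sets) to the Fubini product Fin × I_{ω^β} on ω × ω^β. -/
/-!
Write `α = ω ^ β`, an additively principal ordinal. The map `(n, y) ↦ α * n + y` is an order
isomorphism `ℕ ×ₗ α ≃o α * ω = ω ^ (β + 1)`, so a set `A ⊆ ω ^ (β + 1)` becomes a set of pairs
with vertical slices `Aₙ ⊆ α`. If infinitely many slices contain a copy of `α`, gluing these copies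
gives a copy of `α * ω` inside `A`. Conversely, if only the slices below `M` do, an embedding of
`α * ω` into `A`, being inflationary, still embeds `α * ω` into the part of `A` above `M`. There
every slice has order type `< α`, so the partial sums of these types stay below `α`, and ranking
a point `(n, y)` by the sum over the earlier slices plus the position of `y` in `Aₙ` embeds that
part of `A` into `α`, which is absurd.
-/

open Ordinal Set

/-- The Fubini product of the Fréchet ideal `Fin` on ω with an ideal `J` on `Y`:
sets all but finitely many of whose vertical sections lie in `J`. -/
def fub {Y : Type*} (J : Set (Set Y)) : Set (Set (ℕ × Y)) :=
  {A | {i : ℕ | {y : Y | (i, y) ∈ A} ∉ J}.Finite}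

/-- The ideal `I_α` of subsets of `α` into which `α` does not embed. -/
def ordIdeal (α : Ordinal) : Set (Set (Set.Iio α)) :=
  {A | ¬ Nonempty ((Set.Iio α) ↪o A)}

theorem Prod.Lex.strictMono_map {α β γ δ : Type*} [Preorder α] [Preorder β] [Preorder γ]
    [Preorder δ] {f : α → γ} (hf : StrictMono f) {g : α → β → δ} (hg : ∀ a, StrictMono (g a)) :
    StrictMono fun p : α ×ₗ β ↦ toLex (f (ofLex p).1, g (ofLex p).1 (ofLex p).2) := by
  intro p q h
  rw [Prod.Lex.lt_iff] at h ⊢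
  simp only [ofLex_toLex]
  rcases h with h | ⟨h, h'⟩
  · exact Or.inl (hf h)
  · rw [h]
    exact Or.inr ⟨rfl, hg _ h'⟩

theorem OrderIso.nonempty_orderEmbedding_iff_preimage {X X' : Type*} [LinearOrder X]
    [Preorder X'] (e : X ≃o X') (A : Set X') :
    Nonempty (X' ↪o A) ↔ Nonempty (X ↪o e ⁻¹' A) := by
  let i : e ⁻¹' A ≃o A := (StrictMonoOn.orderIso e _ (e.strictMono.strictMonoOn _)).trans
    (OrderIso.setCongr _ _ (e.image_preimage A))
  exact ⟨fun ⟨f⟩ ↦ ⟨(e.toOrderEmbedding.trans f).trans i.symm.toOrderEmbedding⟩,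
    fun ⟨f⟩ ↦ ⟨(e.symm.toOrderEmbedding.trans f).trans i.toOrderEmbedding⟩⟩

namespace Ordinal

theorem isPrincipal_add_lift {a : Ordinal.{u}} (ha : IsPrincipal (· + ·) a) :
    IsPrincipal (· + ·) (lift.{v} a) := by
  intro b c hb hc
  obtain ⟨b, hb', rfl⟩ := lt_lift_iff.1 hb
  obtain ⟨c, hc', rfl⟩ := lt_lift_iff.1 hc
  simpa only [← lift_add, lift_lt] using ha hb' hc'

theorem mul_natCast_add_lt_mul_omega0 (a : Ordinal) (n : ℕ) {b : Ordinal} (hb : b < a) :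
    a * n + b < a * ω :=
  lt_mul_iff.2 ⟨n, natCast_lt_omega0 n, b, hb, rfl⟩

theorem strictMono_mul_natCast_add (a : Ordinal) :
    StrictMono fun p : ℕ ×ₗ Iio a ↦ a * (ofLex p).1 + (ofLex p).2 := by
  intro p q h
  rcases Prod.Lex.lt_iff.1 h with h | ⟨h, h'⟩
  · calc a * (ofLex p).1 + (ofLex p).2 < a * ((ofLex p).1 + 1) := by
          rw [mul_add_one]; exact add_lt_add_right (ofLex p).2.2 _
      _ ≤ a * (ofLex q).1 := by gcongr; exact_mod_cast h
      _ ≤ a * (ofLex q).1 + (ofLex q).2 := le_self_add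
  · dsimp only
    rw [h]
    exact add_lt_add_right (Subtype.coe_lt_coe.2 h') _

noncomputable def lexIioMulOmega0 (a : Ordinal) : ℕ ×ₗ Iio a ≃o Iio (a * ω) :=
  StrictMono.orderIsoOfSurjective
    (fun p ↦ ⟨a * (ofLex p).1 + (ofLex p).2, mul_natCast_add_lt_mul_omega0 a _ (ofLex p).2.2⟩)
    (strictMono_mul_natCast_add a) fun x ↦ by
      obtain ⟨q, hq, b, hb, hx⟩ := lt_mul_iff.1 x.2
      obtain ⟨n, rfl⟩ := lt_omega0.1 hq
      exact ⟨toLex (n, ⟨b, hb⟩), Subtype.ext hx.symm⟩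

end Ordinal

section Slice

variable {Y : Type*} [LinearOrder Y]

def slice (A : Set (ℕ ×ₗ Y)) (i : ℕ) : Set Y := {y | toLex (i, y) ∈ A}

theorem nonempty_orderEmbedding_of_infinite {A : Set (ℕ ×ₗ Y)}
    (hA : {i | Nonempty (Y ↪o slice A i)}.Infinite) : Nonempty (ℕ ×ₗ Y ↪o A) := by
  let g k := (Nat.nth_mem_of_infinite hA k).some
  have hmono := Prod.Lex.strictMono_map (Nat.nth_strictMono hA)
    (fun k ↦ (Subtype.strictMono_coe _).comp (g k).strictMono)
  exact ⟨OrderEmbedding.ofStrictMono (fun p ↦ ⟨_, (g (ofLex p).1 (ofLex p).2).2⟩) hmono⟩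

variable [WellFoundedLT Y]

theorem isEmpty_natLex_orderEmbedding [Nonempty Y] : IsEmpty (ℕ ×ₗ Y ↪o Y) := by
  refine ⟨fun f ↦ ?_⟩
  obtain ⟨y⟩ := ‹Nonempty Y›
  have hf : StrictMono fun p ↦ toLex (0, f p) := fun p q h ↦
    Prod.Lex.toLex_lt_toLex.2 (Or.inr ⟨rfl, f.strictMono h⟩)
  simpa using Prod.Lex.monotone_fst _ _ (hf.le_apply (x := toLex (1, y)))

theorem nonempty_orderEmbedding_inter_setOf_le {A : Set (ℕ ×ₗ Y)} (f : ℕ ×ₗ Y ↪o A) (M : ℕ) :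
    Nonempty (ℕ ×ₗ Y ↪o ↥(A ∩ {p | M ≤ (ofLex p).1})) := by
  let shift (p : ℕ ×ₗ Y) : ℕ ×ₗ Y := toLex ((ofLex p).1 + M, (ofLex p).2)
  have hshift : StrictMono shift :=
    Prod.Lex.strictMono_map add_left_strictMono fun _ ↦ strictMono_id
  have hf : StrictMono fun p ↦ (f p : ℕ ×ₗ Y) := (Subtype.strictMono_coe _).comp f.strictMono
  refine ⟨OrderEmbedding.ofStrictMono (fun p ↦ ⟨f (shift p), (f (shift p)).2, ?_⟩)
    fun p q h ↦ hf (hshift h)⟩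
  calc M ≤ (ofLex (shift p)).1 := Nat.le_add_left _ _
    _ ≤ (ofLex (f (shift p) : ℕ ×ₗ Y)).1 := Prod.Lex.monotone_fst _ _ hf.le_apply

theorem nonempty_orderEmbedding_of_type_slice_lt (hY : IsPrincipal (· + ·) (typeLT Y))
    {A : Set (ℕ ×ₗ Y)} (hA : ∀ i, typeLT (slice A i) < typeLT Y) : Nonempty (A ↪o Y) := by
  let S : ℕ → Ordinal := fun n ↦ Nat.rec 0 (fun i s ↦ s + typeLT (slice A i)) n
  have hS (n : ℕ) : S n < typeLT Y := by
    induction n with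
    | zero => exact zero_le.trans_lt (hA 0)
    | succ n ih => exact hY ih (hA n)
  let rank (p : A) : Ordinal :=
    S (ofLex p.1).1 + typein (α := slice A (ofLex p.1).1) (· < ·) ⟨(ofLex p.1).2, p.2⟩
  have rank_lt (p : A) : rank p < S ((ofLex p.1).1 + 1) :=
    add_lt_add_right (typein_lt_type _ _) _
  have hrank : StrictMono rank := by
    rintro ⟨p, hp⟩ ⟨q, hq⟩ h
    rcases Prod.Lex.lt_iff.1 h with h | ⟨h, h'⟩
    · calc rank ⟨p, hp⟩ < S ((ofLex p).1 + 1) := rank_lt _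
        _ ≤ S (ofLex q).1 := (monotone_nat_of_le_succ fun n ↦ le_self_add) h
        _ ≤ rank ⟨q, hq⟩ := le_self_add
    · obtain ⟨⟨i, y⟩, rfl⟩ := toLex.surjective p
      obtain ⟨⟨j, z⟩, rfl⟩ := toLex.surjective q
      obtain rfl : i = j := h
      exact add_lt_add_right ((typein_lt_typein (α := slice A i) (· < ·)).2 h') _
  exact ⟨OrderEmbedding.ofStrictMono
    (fun p ↦ enum (α := Y) (· < ·) ⟨rank p, (rank_lt p).trans (hS ((ofLex p.1).1 + 1))⟩)
    fun p q h ↦ enum_lt_enum.2 (hrank h)⟩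

theorem isEmpty_orderEmbedding_of_finite (hY : IsPrincipal (· + ·) (typeLT Y))
    {A : Set (ℕ ×ₗ Y)} (hA : {i | Nonempty (Y ↪o slice A i)}.Finite) :
    IsEmpty (ℕ ×ₗ Y ↪o A) := by
  refine ⟨fun f ↦ ?_⟩
  have : Nonempty Y := by
    by_contra hY
    rw [not_nonempty_iff] at hY
    exact Set.infinite_univ (hA.subset fun i _ ↦ ⟨OrderEmbedding.ofIsEmpty⟩)
  obtain ⟨M, hM⟩ := hA.bddAbove
  have hslice (i : ℕ) : typeLT (slice (A ∩ {p | M + 1 ≤ (ofLex p).1}) i) < typeLT Y := by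
    by_contra! h
    obtain ⟨g⟩ := type_le_iff'.1 h
    obtain ⟨y⟩ := ‹Nonempty Y›
    have hi : M + 1 ≤ i := (g y).2.2
    have : i ≤ M := hM ⟨OrderEmbedding.ofStrictMono
      (fun y ↦ Set.inclusion (fun _ hz ↦ hz.1) (g y)) fun _ _ h ↦ g.map_rel_iff.2 h⟩
    omega
  obtain ⟨g⟩ := nonempty_orderEmbedding_of_type_slice_lt hY hslice
  obtain ⟨f'⟩ := nonempty_orderEmbedding_inter_setOf_le f (M + 1)
  exact isEmpty_natLex_orderEmbedding.false (f'.trans g)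

theorem nonempty_orderEmbedding_iff_infinite (hY : IsPrincipal (· + ·) (typeLT Y))
    (A : Set (ℕ ×ₗ Y)) :
    Nonempty (ℕ ×ₗ Y ↪o A) ↔ {i | Nonempty (Y ↪o slice A i)}.Infinite :=
  ⟨fun ⟨f⟩ hA ↦ (isEmpty_orderEmbedding_of_finite hY hA).false f,
    nonempty_orderEmbedding_of_infinite⟩

end Slice

theorem exists_equiv_ordIdeal_mul_omega0 {a : Ordinal} (ha : IsPrincipal (· + ·) a) :
    ∃ e : Iio (a * ω) ≃ ℕ × Iio a, ∀ A : Set (Iio (a * ω)),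
      A ∈ ordIdeal (a * ω) ↔ e '' A ∈ fub (ordIdeal a) := by
  let o := lexIioMulOmega0 a
  refine ⟨o.symm.toEquiv.trans ofLex, fun A ↦ ?_⟩
  have hY : IsPrincipal (· + ·) (typeLT (Iio a)) := by
    rw [type_lt_Iio]
    exact isPrincipal_add_lift ha
  have hslice (i : ℕ) :
      {y | (i, y) ∈ (o.symm.toEquiv.trans ofLex) '' A} = slice (o ⁻¹' A) i :=
    Set.ext fun _ ↦ Set.mem_image_equiv
  simp_rw [fub, Set.mem_ofPred_eq, hslice]
  simp only [ordIdeal, Set.mem_ofPred_eq, not_not, o.nonempty_orderEmbedding_iff_preimage,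
    nonempty_orderEmbedding_iff_infinite hY, Set.not_infinite]

theorem stmt13_general (β : Ordinal) :
    ∃ e : (Set.Iio (omega0 ^ (β + 1))) ≃ ℕ × (Set.Iio (omega0 ^ β)),
      ∀ A : Set (Set.Iio (omega0 ^ (β + 1))),
        A ∈ ordIdeal (omega0 ^ (β + 1)) ↔ e '' A ∈ fub (ordIdeal (omega0 ^ β)) := by
  rw [opow_add_one]
  exact exists_equiv_ordIdeal_mul_omega0 (isPrincipal_add_omega0_opow β)

/-- For every β ≥ 1, the ideal I_{ω^{β+1}} on ω^{β+1} is isomorphic, via a bijection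
of the underlying sets, to the Fubini product Fin × I_{ω^β} on ω × ω^β. -/
theorem stmt13 (β : Ordinal) (hβ : 1 ≤ β) :
    ∃ e : (Set.Iio (omega0 ^ (β + 1))) ≃ ℕ × (Set.Iio (omega0 ^ β)),
      ∀ A : Set (Set.Iio (omega0 ^ (β + 1))),
        A ∈ ordIdeal (omega0 ^ (β + 1)) ↔ e '' A ∈ fub (ordIdeal (omega0 ^ β)) :=
  stmt13_general β
end

section
/- Let γ be a countable limit ordinal, ⟨δ_n⟩ increasing cofinal in γ∖{0}, L = Σ_{n∈ω} L_n with L_n ≅ ω^{δ_n} pairwise disjoint, and for A ⊆ L, m ∈ ω set S^m_A = {n : the order type of A ∩ L_n is ≥ ω^{δ_m}}. Then A ⊆ L contains a copy of L if and only if S^m_A is infinite for every m ∈ ω. -/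
open Ordinal Set

/-- The order type of a set in a linear order: the (unique, when it exists)
ordinal `o` such that the set is order-isomorphic to `Set.Iio o`. -/
noncomputable def otypeOf {X : Type*} [LinearOrder X] (s : Set X) : Ordinal :=
  sInf {o : Ordinal | Nonempty (s ≃o Set.Iio o)}

/-!
A copy of `L` in `A` maps the block `L_k ≅ ω^δ_k` into `A`. If only fibres of `A` with index
`≤ N` had type `≥ ω^δ_m`, every fibre would have type `≤ c = ω^δ_j` with `j = max N m`, and
`⟨n, x⟩ ↦ c * n + x` would embed `A` into `c * ω = ω^(δ_j + 1) < ω^δ_(j+2)`, which is absurd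
for `k = j + 2`. Conversely, if every `S^m_A` is infinite, choose `n_0 < n_1 < ⋯` with
`n_m ∈ S^m_A` and map `L_m` into the fibre of `A` over `n_m`.
-/

universe u

section SigmaLex

variable {ι κ : Type*} {α : ι → Type*} {β : κ → Type*}

def OrderEmbedding.sigmaLexMk [LinearOrder ι] [∀ i, LinearOrder (α i)] (i : ι) :
    α i ↪o Σₗ i, α i :=
  OrderEmbedding.ofStrictMono (fun a => toLex (⟨i, a⟩ : Σ i, α i)) fun _ _ h =>
    Sigma.Lex.right _ _ h

theorem strictMono_sigmaLex_map [Preorder ι] [∀ i, Preorder (α i)] [Preorder κ]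
    [∀ j, Preorder (β j)] {g : ι → κ} (hg : StrictMono g) (f : ∀ i, α i ↪o β (g i)) :
    StrictMono fun x : Σₗ i, α i => (toLex ⟨g (ofLex x).1, f _ (ofLex x).2⟩ : Σₗ j, β j) := by
  rintro _ _ (⟨a, b, hij⟩ | ⟨a, b, hab⟩)
  · exact Sigma.Lex.left _ _ (hg hij)
  · exact Sigma.Lex.right _ _ ((f _).strictMono hab)

def OrderEmbedding.sigmaLexMap [LinearOrder ι] [∀ i, LinearOrder (α i)] [Preorder κ]
    [∀ j, Preorder (β j)] {g : ι → κ} (hg : StrictMono g) (f : ∀ i, α i ↪o β (g i)) :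
    (Σₗ i, α i) ↪o Σₗ j, β j :=
  OrderEmbedding.ofStrictMono _ (strictMono_sigmaLex_map hg f)

noncomputable def OrderIso.sigmaLexFibers [LinearOrder ι] [∀ i, LinearOrder (α i)]
    (A : Set (Σₗ i, α i)) : (Σₗ i, {a : α i | toLex ⟨i, a⟩ ∈ A}) ≃o A :=
  StrictMono.orderIsoOfSurjective (fun x => ⟨toLex ⟨(ofLex x).1, (ofLex x).2⟩, (ofLex x).2.2⟩)
    (fun _ _ h => strictMono_sigmaLex_map strictMono_id (fun _ => OrderEmbedding.subtype _) h)
    fun x => ⟨toLex ⟨(ofLex x.1).1, ⟨(ofLex x.1).2, x.2⟩⟩, rfl⟩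

end SigmaLex

namespace Ordinal

theorem eq_of_orderIso_Iio {a b : Ordinal.{u}} (e : Iio a ≃o Iio b) : a = b := by
  have := e.ordinalType_congr
  rwa [type_lt_Iio, type_lt_Iio, lift_inj] at this

theorem le_of_orderEmbedding_Iio {a b : Ordinal.{u}} (f : Iio a ↪o Iio b) : a ≤ b := by
  have := f.ltEmbedding.ordinal_type_le
  rwa [type_lt_Iio, type_lt_Iio, lift_le] at this

noncomputable def iioInclusion {a b : Ordinal} (h : a ≤ b) : Iio a ↪o Iio b :=
  OrderEmbedding.ofStrictMono (Set.inclusion (Iio_subset_Iio h)) fun _ _ h => h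

theorem mul_natCast_add_lt {c x : Ordinal} (n : ℕ) (hx : x < c) :
    c * n + x < c * (n + 1 : ℕ) := by
  rw [Nat.cast_succ, mul_add_one]
  exact add_lt_add_right hx _

noncomputable def sigmaLexEmbeddingMulOmega0 {α : ℕ → Type*} [∀ n, LinearOrder (α n)] {c : Ordinal}
    (f : ∀ n, α n ↪o Iio c) : (Σₗ n, α n) ↪o Iio (c * ω) :=
  OrderEmbedding.ofStrictMono
    (fun x => ⟨c * (ofLex x).1 + f _ (ofLex x).2,
      (mul_natCast_add_lt _ (f _ _).2).trans_le
        (mul_le_mul_right (natCast_lt_omega0 _).le _)⟩) <| by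
    rintro _ _ (⟨a, b, hij⟩ | ⟨a, b, hab⟩)
    · calc _ < c * (_ + 1 : ℕ) := mul_natCast_add_lt _ (f _ a).2
        _ ≤ c * _ := mul_le_mul_right (Nat.cast_le.2 hij) _
        _ ≤ _ := le_self_add
    · exact add_lt_add_right (Subtype.coe_lt_coe.2 ((f _).strictMono hab)) _

end Ordinal

theorem otypeOf_eq_of_orderIso {X : Type*} [LinearOrder X] {s : Set X} {o : Ordinal}
    (e : s ≃o Iio o) : otypeOf s = o := by
  have : {o' : Ordinal | Nonempty (s ≃o Iio o')} = {o} := by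
    ext o'
    exact ⟨fun ⟨e'⟩ => eq_of_orderIso_Iio (e'.symm.trans e), fun h => h ▸ ⟨e⟩⟩
  rw [otypeOf, this, csInf_singleton]

theorem nonempty_orderIso_Iio_otypeOf {a : Ordinal.{u}} (s : Set (Iio a)) :
    Nonempty (s ≃o Iio (otypeOf s : Ordinal.{u})) := by
  have hle : typeLT s ≤ lift.{u + 1} a := by
    rw [← type_lt_Iio]
    exact (OrderEmbedding.subtype s).ltEmbedding.ordinal_type_le
  obtain ⟨o, ho⟩ := mem_range_lift_of_le hle
  obtain ⟨e⟩ := type_eq.1 (show typeLT s = typeLT (Iio o) by rw [type_lt_Iio, ho])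
  rw [otypeOf_eq_of_orderIso (OrderIso.ofRelIsoLT e)]
  exact ⟨OrderIso.ofRelIsoLT e⟩

theorem otypeOf_le {a : Ordinal.{u}} (s : Set (Iio a)) : (otypeOf s : Ordinal.{u}) ≤ a :=
  le_of_orderEmbedding_Iio
    ((nonempty_orderIso_Iio_otypeOf s).some.symm.toOrderEmbedding.trans (OrderEmbedding.subtype s))

section Fibres

variable {a : ℕ → Ordinal.{u}} (A : Set (Σₗ n, Iio (a n)))

theorem nonempty_orderEmbedding_Iio_mul_omega0_of_otypeOf_le {c : Ordinal.{u}}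
    (h : ∀ n, otypeOf {y | toLex ⟨n, y⟩ ∈ A} ≤ c) : Nonempty (A ↪o Iio (c * ω)) :=
  ⟨(OrderIso.sigmaLexFibers A).symm.toOrderEmbedding.trans <| sigmaLexEmbeddingMulOmega0 fun n =>
    (nonempty_orderIso_Iio_otypeOf _).some.toOrderEmbedding.trans (iioInclusion (h n))⟩

theorem nonempty_orderEmbedding_of_infinite_s16 {b : ℕ → Ordinal.{u}}
    (h : ∀ m, {n | b m ≤ otypeOf {y | toLex ⟨n, y⟩ ∈ A}}.Infinite) :
    Nonempty ((Σₗ m, Iio (b m)) ↪o A) := by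
  obtain ⟨φ, hφ, hφb⟩ := Filter.extraction_forall_of_frequently fun m =>
    Nat.frequently_atTop_iff_infinite.2 (h m)
  exact ⟨(OrderEmbedding.sigmaLexMap hφ fun m => (iioInclusion (hφb m)).trans
    (nonempty_orderIso_Iio_otypeOf _).some.symm.toOrderEmbedding).trans
      (OrderIso.sigmaLexFibers A).toOrderEmbedding⟩

end Fibres

theorem infinite_of_orderEmbedding {δ : ℕ → Ordinal.{u}} (hδ : StrictMono δ)
    (A : Set (Σₗ n, Iio (ω ^ δ n))) (f : (Σₗ n, Iio (ω ^ δ n)) ↪o A) (m : ℕ) :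
    {n | ω ^ δ m ≤ otypeOf {y | toLex ⟨n, y⟩ ∈ A}}.Infinite := by
  intro hfin
  obtain ⟨N, hN⟩ := hfin.bddAbove
  set j := max N m
  have hfibre : ∀ n, otypeOf {y | toLex ⟨n, y⟩ ∈ A} ≤ ω ^ δ j := by
    intro n
    by_cases hn : n ≤ N
    · exact (otypeOf_le _).trans
        (opow_le_opow_right omega0_pos (hδ.monotone (le_max_of_le_left hn)))
    · exact (not_le.1 fun h => hn (hN h)).le.trans
        (opow_le_opow_right omega0_pos (hδ.monotone (le_max_right _ _)))
  obtain ⟨g⟩ := nonempty_orderEmbedding_Iio_mul_omega0_of_otypeOf_le A hfibre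
  have hle := le_of_orderEmbedding_Iio (((OrderEmbedding.sigmaLexMk (j + 2)).trans f).trans g)
  rw [← opow_succ, opow_le_opow_iff_right one_lt_omega0] at hle
  exact hle.not_gt ((Order.succ_le_of_lt (hδ j.lt_succ_self)).trans_lt (hδ (j + 1).lt_succ_self))

theorem stmt16_general (δ : ℕ → Ordinal) (hδmono : StrictMono δ) :
    ∀ A : Set (Σₗ n : ℕ, (Set.Iio (omega0 ^ δ n))),
      Nonempty ((Σₗ n : ℕ, (Set.Iio (omega0 ^ δ n))) ↪o A) ↔
        ∀ m : ℕ,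
          {n : ℕ | omega0 ^ δ m ≤
            otypeOf {y : Set.Iio (omega0 ^ δ n) | toLex ⟨n, y⟩ ∈ A}}.Infinite :=
  fun A => ⟨fun ⟨f⟩ => infinite_of_orderEmbedding hδmono A f, nonempty_orderEmbedding_of_infinite_s16 A⟩

/-- Let γ be a countable limit ordinal, ⟨δ_n⟩ strictly increasing, nonzero, cofinal
in γ, and L = Σ_{n∈ω} L_n (lexicographic sum) with L_n ≅ ω^{δ_n}. For A ⊆ L and
m ∈ ω let S^m_A = {n : type(A ∩ L_n) ≥ ω^{δ_m}}. Then A contains a copy of L iff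
S^m_A is infinite for every m. -/
theorem stmt16 (γ : Ordinal) (hc : γ.card ≤ Cardinal.aleph0) (hl : Order.IsSuccLimit γ)
    (δ : ℕ → Ordinal) (hδmono : StrictMono δ) (hδpos : ∀ n, 0 < δ n)
    (hδlt : ∀ n, δ n < γ) (hcof : ∀ β < γ, ∃ n, β < δ n) :
    ∀ A : Set (Σₗ n : ℕ, (Set.Iio (omega0 ^ δ n))),
      Nonempty ((Σₗ n : ℕ, (Set.Iio (omega0 ^ δ n))) ↪o A) ↔
        ∀ m : ℕ,
          {n : ℕ | omega0 ^ δ m ≤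
            otypeOf {y : Set.Iio (omega0 ^ δ n) | toLex ⟨n, y⟩ ∈ A}}.Infinite :=
  stmt16_general δ hδmono
end
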